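/- Let γ > 1, ε ∈ (0,1), let ψ be a Yamada–Watanabe density for (γ,ε), and let V = V_{γ,ε}. Let α ∈ [1/2, 1], K₂ > 0, and let σ : ℝ → ℝ satisfy |σ(x) − σ(y)| ≤ K₂ |x − y|^α for all x, y ∈ ℝ. Then for all x, y ∈ ℝ, V''(x − y) · (σ(x) − σ(y))² ≤ 2 K₂² ε^{2α−1} / ln γ. -/

import Mathlib

open MeasureTheory

/-- A Yamada–Watanabe density for `(γ, ε)`: a continuous nonnegative function supported
in `[ε/γ, ε]`, bounded by `2/(x ln γ)` for `x > 0`, integrating to `1` over `[ε/γ, ε]`. -/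
def IsYWDensity (γ ε : ℝ) (ψ : ℝ → ℝ) : Prop :=
  Continuous ψ ∧ (∀ x, 0 ≤ ψ x) ∧ (∀ x, x ∉ Set.Icc (ε / γ) ε → ψ x = 0) ∧
  (∀ x, 0 < x → ψ x ≤ 2 / (x * Real.log γ)) ∧ (∫ x in (ε / γ)..ε, ψ x) = 1

/-- The Yamada–Watanabe function `V(x) = ∫_0^{|x|} ∫_0^y ψ(z) dz dy`. -/
noncomputable def ywV (ψ : ℝ → ℝ) (x : ℝ) : ℝ :=
  ∫ y in (0:ℝ)..|x|, (∫ z in (0:ℝ)..y, ψ z)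

section aux

variable (ψ : ℝ → ℝ)

noncomputable def ywF (y : ℝ) : ℝ := ∫ z in (0:ℝ)..y, ψ z
noncomputable def ywG (y : ℝ) : ℝ := ∫ z in (0:ℝ)..y, ywF ψ z

variable {ψ} {γ ε : ℝ}

lemma ywF_continuous (hc : Continuous ψ) : Continuous (ywF ψ) := by
  rw [continuous_iff_continuousAt]
  exact fun y => ((hc.integral_hasStrictDerivAt 0 y).hasDerivAt).continuousAt

lemma ywF_zero_of_nonpos (hsupp : ∀ x, x ∉ Set.Icc (ε / γ) ε → ψ x = 0)
    (hpos : 0 < ε / γ) {y : ℝ} (hy : y ≤ 0) : ywF ψ y = 0 := by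
  unfold ywF
  rw [intervalIntegral.integral_congr (g := fun _ => (0:ℝ)), intervalIntegral.integral_zero]
  intro z hz
  rw [Set.uIcc_of_ge hy] at hz
  exact hsupp z (fun h => absurd (lt_of_lt_of_le hpos h.1) (not_lt.mpr hz.2))

lemma ywG_zero_of_nonpos (hsupp : ∀ x, x ∉ Set.Icc (ε / γ) ε → ψ x = 0)
    (hpos : 0 < ε / γ) {y : ℝ} (hy : y ≤ 0) : ywG ψ y = 0 := by
  unfold ywG
  rw [intervalIntegral.integral_congr (g := fun _ => (0:ℝ)), intervalIntegral.integral_zero]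
  intro z hz
  rw [Set.uIcc_of_ge hy] at hz
  exact ywF_zero_of_nonpos hsupp hpos hz.2

lemma ywV_eq (hsupp : ∀ x, x ∉ Set.Icc (ε / γ) ε → ψ x = 0) (hpos : 0 < ε / γ) :
    ywV ψ = fun x => ywG ψ x + ywG ψ (-x) := by
  funext x
  have hV : ywV ψ x = ywG ψ |x| := rfl
  rcases le_or_gt 0 x with h | h
  · rw [hV, abs_of_nonneg h, ywG_zero_of_nonpos hsupp hpos (neg_nonpos.mpr h), add_zero]
  · rw [hV, abs_of_neg h, ywG_zero_of_nonpos hsupp hpos h.le, zero_add]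

lemma ywV_deriv2 (hc : Continuous ψ) (hsupp : ∀ x, x ∉ Set.Icc (ε / γ) ε → ψ x = 0)
    (hpos : 0 < ε / γ) (t : ℝ) :
    deriv (deriv (ywV ψ)) t = ψ t + ψ (-t) := by
  have hFc := ywF_continuous hc
  have hd1 : deriv (ywV ψ) = fun x => ywF ψ x - ywF ψ (-x) := by
    funext x
    rw [ywV_eq hsupp hpos]
    have h1 : HasDerivAt (ywG ψ) (ywF ψ x) x := (hFc.integral_hasStrictDerivAt 0 x).hasDerivAt
    have h2 : HasDerivAt (fun u => ywG ψ (-u)) (-ywF ψ (-x)) x := by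
      have := ((hFc.integral_hasStrictDerivAt 0 (-x)).hasDerivAt).comp x (hasDerivAt_neg x)
      rw [mul_neg_one] at this
      exact this
    rw [sub_eq_add_neg]; exact (h1.add h2).deriv
  rw [hd1]
  have h1 : HasDerivAt (ywF ψ) (ψ t) t := (hc.integral_hasStrictDerivAt 0 t).hasDerivAt
  have h2 : HasDerivAt (fun u => ywF ψ (-u)) (-ψ (-t)) t := by
    have := ((hc.integral_hasStrictDerivAt 0 (-t)).hasDerivAt).comp t (hasDerivAt_neg t)
    rw [mul_neg_one] at this
    exact this
  rw [← sub_neg_eq_add]; exact (h1.sub h2).deriv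

end aux

/-- For `V = V_{γ,ε}` and `σ` Hölder continuous of order `α ∈ [1/2,1]`
with constant `K₂ > 0`:  `V''(x−y) · (σ(x)−σ(y))² ≤ 2 K₂² ε^{2α−1} / ln γ` for all `x, y`. -/
theorem ywV_second_deriv_sigma_bound (γ ε : ℝ) (hγ : 1 < γ) (hε : ε ∈ Set.Ioo (0:ℝ) 1)
    (ψ : ℝ → ℝ) (hψ : IsYWDensity γ ε ψ)
    (α K₂ : ℝ) (hα : α ∈ Set.Icc (1/2 : ℝ) 1) (hK₂ : 0 < K₂)
    (σ : ℝ → ℝ) (hσ : ∀ x y : ℝ, |σ x - σ y| ≤ K₂ * |x - y| ^ α) :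
    ∀ x y : ℝ,
      deriv (deriv (ywV ψ)) (x - y) * (σ x - σ y) ^ 2 ≤
        2 * K₂ ^ 2 * ε ^ (2 * α - 1) / Real.log γ := by
  obtain ⟨hc, hnn, hsupp, hbound, -⟩ := hψ
  have hγ0 : (0:ℝ) < γ := lt_trans one_pos hγ
  have hpos : 0 < ε / γ := div_pos hε.1 hγ0
  have hlog : 0 < Real.log γ := Real.log_pos hγ
  have hexp : 0 ≤ 2 * α - 1 := by linarith [hα.1]
  have hRHS : 0 ≤ 2 * K₂ ^ 2 * ε ^ (2 * α - 1) / Real.log γ := by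
    have := Real.rpow_nonneg hε.1.le (2 * α - 1)
    positivity
  intro x y
  set t := x - y with ht
  rw [ywV_deriv2 hc hsupp hpos]
  by_cases hz : ψ t + ψ (-t) = 0
  · rw [hz, zero_mul]; exact hRHS
  -- the sum is nonzero, so |t| ∈ [ε/γ, ε]
  have hs : |t| ∈ Set.Icc (ε / γ) ε ∧ ψ t + ψ (-t) = ψ |t| := by
    by_cases h1 : t ∈ Set.Icc (ε / γ) ε
    · have ht0 : 0 < t := lt_of_lt_of_le hpos h1.1
      have : ψ (-t) = 0 := hsupp _ (fun h => absurd (lt_of_lt_of_le hpos h.1) (by simp; linarith))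
      rw [abs_of_pos ht0]
      exact ⟨h1, by rw [this, add_zero]⟩
    · have h2 : -t ∈ Set.Icc (ε / γ) ε := by
        by_contra h2
        exact hz (by rw [hsupp _ h1, hsupp _ h2, add_zero])
      have ht0 : t < 0 := by
        have := lt_of_lt_of_le hpos h2.1; linarith
      rw [abs_of_neg ht0]
      exact ⟨h2, by rw [hsupp _ h1, zero_add]⟩
  obtain ⟨⟨hs1, hs2⟩, hsum⟩ := hs
  set s := |t| with hsdef
  have hs0 : 0 < s := lt_of_lt_of_le hpos hs1
  rw [hsum]
  have hσ2 : (σ x - σ y) ^ 2 ≤ (K₂ * s ^ α) ^ 2 := by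
    rw [← sq_abs]
    exact pow_le_pow_left₀ (abs_nonneg _) (hσ x y) 2
  have hψb : ψ s ≤ 2 / (s * Real.log γ) := hbound s hs0
  have step1 : ψ s * (σ x - σ y) ^ 2 ≤ (2 / (s * Real.log γ)) * (K₂ * s ^ α) ^ 2 :=
    mul_le_mul hψb hσ2 (sq_nonneg _) (by positivity)
  refine le_trans step1 ?_
  have hsα : (s ^ α) ^ 2 = s ^ (2 * α - 1) * s := by
    rw [← Real.rpow_natCast (s ^ α) 2, ← Real.rpow_mul hs0.le, ← Real.rpow_add_one hs0.ne']
    norm_num; ring_nf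
  have heq : (2 / (s * Real.log γ)) * (K₂ * s ^ α) ^ 2
      = 2 * K₂ ^ 2 * s ^ (2 * α - 1) / Real.log γ := by
    rw [mul_pow, hsα]
    field_simp
  rw [heq]
  have hmono : s ^ (2 * α - 1) ≤ ε ^ (2 * α - 1) :=
    Real.rpow_le_rpow hs0.le hs2 hexp
  gcongr
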